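/- arXiv:cs/0609141 — 2 statements merged into one kernel-verified Lean document; each statement's English description precedes it below -/
import Mathlib

section
/- Let (V_0,…,V_{n−1}) be an n-gon with n ≥ 4. Suppose that for all i ∈ {2,…,n−2}: (1) V_{i+1} and V_0 lie strictly to one side of [V_{i−1}, V_i]; (2) V_{i−1} and V_0 lie strictly to one side of [V_i, V_{i+1}]; and (3) V_i and V_{i+1} lie strictly to one side of [V_0, V_1]. Then the polygon is quasi-strictly convex, i.e., convex and quasi-strict. Conversely, every quasi-strictly convex n-gon with n ≥ 4 satisfies these 3(n−3) conditions. -/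
/-- Determinant of the 3×3 matrix with rows (1,x_P,y_P), (1,x_Q,y_Q), (1,x_R,y_R). -/
def det3 (P Q R : ℝ × ℝ) : ℝ :=
  Matrix.det !![1, P.1, P.2; 1, Q.1, Q.2; 1, R.1, R.2]

/-- Dot product on ℝ². -/
def dot2 (a b : ℝ × ℝ) : ℝ := a.1 * b.1 + a.2 * b.2

/-- The points of `S` lie strictly to one side of the segment `[P,Q]`:
there is a line through `P` and `Q` (with normal `nv`) such that all of `S`
lies in one of the open half-planes it bounds. -/
def StrictSide (P Q : ℝ × ℝ) (S : Set (ℝ × ℝ)) : Prop :=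
  ∃ nv : ℝ × ℝ, nv ≠ 0 ∧ dot2 nv (Q - P) = 0 ∧ ∀ A ∈ S, 0 < dot2 nv (A - P)

/-- The points of `S` lie (non-strictly) to one side of the segment `[P,Q]`:
there is a line containing `[P,Q]` bounding a closed half-plane containing `S`. -/
def WeakSide (P Q : ℝ × ℝ) (S : Set (ℝ × ℝ)) : Prop :=
  ∃ nv : ℝ × ℝ, nv ≠ 0 ∧ dot2 nv (Q - P) = 0 ∧ ∀ A ∈ S, 0 ≤ dot2 nv (A - P)

/-- The successor index modulo `n`. -/
def nxt {n : ℕ} (i : Fin n) : Fin n :=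
  ⟨(i.val + 1) % n, Nat.mod_lt _ (Nat.zero_lt_of_lt i.isLt)⟩

/-- The polygon `(V 0, …, V (n-1))` is convex: the union of its edges equals
the boundary of the convex hull of its vertex set. -/
def IsConvexPolygon {n : ℕ} (V : Fin n → ℝ × ℝ) : Prop :=
  (⋃ i : Fin n, segment ℝ (V i) (V (nxt i))) = frontier (convexHull ℝ (Set.range V))

/-- Quasi-strict: no two adjacent vertices are collinear with any other vertex. -/
def QuasiStrict {n : ℕ} (V : Fin n → ℝ × ℝ) : Prop :=
  ∀ i j : Fin n, j ≠ i → j ≠ nxt i → ¬ Collinear ℝ ({V i, V (nxt i), V j} : Set (ℝ × ℝ))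

/-- Strict: no three vertices with distinct indices are collinear. -/
def StrictPoly {n : ℕ} (V : Fin n → ℝ × ℝ) : Prop :=
  ∀ i j k : Fin n, i ≠ j → i ≠ k → j ≠ k → ¬ Collinear ℝ ({V i, V j, V k} : Set (ℝ × ℝ))

/-- The vertices other than the endpoints of edge `i`. -/
def OtherVerts {n : ℕ} (V : Fin n → ℝ × ℝ) (i : Fin n) : Set (ℝ × ℝ) :=
  {P | ∃ j : Fin n, j ≠ i ∧ j ≠ nxt i ∧ P = V j}

/-- The polygon is strictly to one side of each of its edges. -/
def StrictlyToOneSide {n : ℕ} (V : Fin n → ℝ × ℝ) : Prop :=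
  ∀ i : Fin n, StrictSide (V i) (V (nxt i)) (OtherVerts V i)

/-- The polygon is (non-strictly) to one side of each of its edges. -/
def ToOneSide {n : ℕ} (V : Fin n → ℝ × ℝ) : Prop :=
  ∀ i : Fin n, WeakSide (V i) (V (nxt i)) (OtherVerts V i)

/-!
Both sides are equivalent to the existence of an orientation `ε` such that every vertex off an
edge `[V i, V (i + 1)]` lies strictly on the `ε`-side of it: `0 < ε * det3 (V i) (V (i + 1)) (V j)`.

For a convex polygon, the midpoint of an edge lies on the frontier of the hull, so the hull has a
supporting line there, which must be the line of the edge; quasi-strictness makes the inequality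
strict. Adjacent edges get the same sign because both see the triangle `V i, V (i + 1), V (i + 2)`.
Conversely, under this condition the hull is the intersection of the closed half-planes of the edges (a point
outside would be separated by a functional maximal at some vertex, but it lies in the corner at
that vertex), and a point of this intersection is on its frontier exactly when it is on an edge.

The local conditions force the triangles `V 0, V k, V (k + 1)`, `V k, V (k + 1), V (k + 2)` and
`V 0, V 1, V k` to have the orientation of `V 0, V 1, V 2`. The Plücker relation
`[XPR][XYQ] = [XPQ][XYR] + [XQR][XYP]`, with `[XPQ] = det3 X P Q`, makes the angular order around a vertex transitive inside a
half-plane; used around `V 0`, around `V (k + 1)` and around `V c`, it gives the orientation of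
every triangle `V a, V b, V c` with `a < b < c`.
-/

open Set

section Det3

variable {a b : ℝ}

lemma det3_eq (P Q R : ℝ × ℝ) :
    det3 P Q R = (Q.1 - P.1) * (R.2 - P.2) - (Q.2 - P.2) * (R.1 - P.1) := by
  simp only [det3, Matrix.det_fin_three, Fin.isValue, Matrix.of_apply, Matrix.cons_val',
    Matrix.cons_val_zero, Matrix.cons_val_fin_one, Matrix.cons_val_one, Matrix.cons_val, one_mul,
    mul_one]
  ring

lemma det3_rotate (P Q R : ℝ × ℝ) : det3 P Q R = det3 Q R P := by
  simp only [det3_eq]; ring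

@[simp] lemma det3_self_left (P R : ℝ × ℝ) : det3 P P R = 0 := by
  simp only [det3_eq]; ring

@[simp] lemma det3_self_mid (P Q : ℝ × ℝ) : det3 P Q P = 0 := by
  simp only [det3_eq]; ring

@[simp] lemma det3_self_right (P Q : ℝ × ℝ) : det3 P Q Q = 0 := by
  simp only [det3_eq]; ring

lemma det3_add_smul (hab : a + b = 1) (P Q x y : ℝ × ℝ) :
    det3 P Q (a • x + b • y) = a * det3 P Q x + b * det3 P Q y := by
  obtain rfl : b = 1 - a := by linarith
  simp only [det3_eq, Prod.fst_add, Prod.snd_add, Prod.smul_fst, Prod.smul_snd, smul_eq_mul]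
  ring

lemma det3_lineMap (P Q A B : ℝ × ℝ) (t : ℝ) :
    det3 P Q (AffineMap.lineMap A B t) = (1 - t) * det3 P Q A + t * det3 P Q B := by
  rw [AffineMap.lineMap_apply_module, det3_add_smul (by ring)]

lemma det3_mul_det3 (X Y P Q R : ℝ × ℝ) :
    det3 X P R * det3 X Y Q = det3 X P Q * det3 X Y R + det3 X Q R * det3 X Y P := by
  simp only [det3_eq]; ring

end Det3

section Geometry

variable {P Q R O A B X Y x y : ℝ × ℝ} {ε a b c : ℝ} {S : Set (ℝ × ℝ)}

lemma mul_pos_trans (hab : 0 < a * b) (hbc : 0 < b * c) : 0 < a * c :=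
  pos_of_mul_pos_right (by nlinarith [mul_pos hab hbc]) (mul_self_nonneg b)

lemma sq_add_sq_sub_pos (hPQ : P ≠ Q) : 0 < (Q.1 - P.1) ^ 2 + (Q.2 - P.2) ^ 2 := by
  by_contra h
  apply hPQ
  ext <;> nlinarith [sq_nonneg (Q.1 - P.1), sq_nonneg (Q.2 - P.2)]

lemma exists_lineMap_eq_of_det3_eq_zero (hPQ : P ≠ Q) (h : det3 P Q x = 0) :
    ∃ t : ℝ, AffineMap.lineMap P Q t = x := by
  have hd := (sq_add_sq_sub_pos hPQ).ne'
  refine ⟨((x.1 - P.1) * (Q.1 - P.1) + (x.2 - P.2) * (Q.2 - P.2)) /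
    ((Q.1 - P.1) ^ 2 + (Q.2 - P.2) ^ 2), ?_⟩
  rw [det3_eq] at h
  ext <;> simp only [AffineMap.lineMap_apply_module, Prod.fst_add, Prod.snd_add, Prod.smul_fst,
    Prod.smul_snd, smul_eq_mul] <;> field_simp
  · linear_combination (Q.2 - P.2) * h
  · linear_combination (P.1 - Q.1) * h

lemma det3_eq_zero_iff_collinear : det3 P Q R = 0 ↔ Collinear ℝ ({P, Q, R} : Set (ℝ × ℝ)) := by
  rcases eq_or_ne P Q with rfl | hPQ
  · simp [collinear_pair]
  constructor
  · intro h
    obtain ⟨t, rfl⟩ := exists_lineMap_eq_of_det3_eq_zero hPQ h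
    exact collinear_triple_of_mem_affineSpan_pair (left_mem_affineSpan_pair ℝ P Q)
      (right_mem_affineSpan_pair ℝ P Q) (AffineMap.lineMap_mem_affineSpan_pair t P Q)
  · intro h
    obtain ⟨t, rfl⟩ := mem_affineSpan_pair_iff_exists_lineMap_eq.1 <|
      h.mem_affineSpan_of_mem_of_ne (p₃ := R) (by simp) (by simp) (by simp) hPQ
    simp [det3_lineMap]

lemma StrictSide.ne_left (h : StrictSide P Q S) (hA : A ∈ S) : A ≠ P := by
  obtain ⟨nv, -, -, hpos⟩ := h
  rintro rfl
  simpa [dot2] using hpos A hA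

lemma StrictSide.ne_right (h : StrictSide P Q S) (hA : A ∈ S) : A ≠ Q := by
  obtain ⟨nv, -, hperp, hpos⟩ := h
  rintro rfl
  exact (hpos A hA).ne' hperp

lemma StrictSide.det3_mul_det3_pos (h : StrictSide P Q S) (hPQ : P ≠ Q) (hA : A ∈ S)
    (hB : B ∈ S) : 0 < det3 P Q A * det3 P Q B := by
  obtain ⟨nv, -, hperp, hpos⟩ := h
  set c := (Q.1 - P.1) * nv.2 - (Q.2 - P.2) * nv.1
  -- Lagrange's identity, with the normal `nv` orthogonal to `Q - P`
  have key : ∀ y, c * det3 P Q y = ((Q.1 - P.1) ^ 2 + (Q.2 - P.2) ^ 2) * dot2 nv (y - P) := by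
    intro y
    simp only [dot2, Prod.fst_sub, Prod.snd_sub] at hperp ⊢
    rw [det3_eq]
    linear_combination (-((Q.1 - P.1) * (y.1 - P.1) + (Q.2 - P.2) * (y.2 - P.2))) * hperp
  have hpos' : ∀ y ∈ S, 0 < c * det3 P Q y := fun y hy ↦ by
    rw [key]; exact mul_pos (sq_add_sq_sub_pos hPQ) (hpos y hy)
  exact mul_pos_trans (b := c) (by rw [mul_comm]; exact hpos' A hA) (hpos' B hB)

lemma strictSide_of_det3_pos (hS : S.Nonempty) (h : ∀ A ∈ S, 0 < ε * det3 P Q A) :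
    StrictSide P Q S := by
  have key : ∀ y, dot2 (ε • (-(Q.2 - P.2), Q.1 - P.1)) (y - P) = ε * det3 P Q y := fun y ↦ by
    simp only [dot2, det3_eq, Prod.smul_fst, Prod.smul_snd, Prod.fst_sub, Prod.snd_sub,
      smul_eq_mul]
    ring
  refine ⟨ε • (-(Q.2 - P.2), Q.1 - P.1), ?_, ?_, fun A hA ↦ (key A).symm ▸ h A hA⟩
  · obtain ⟨A, hA⟩ := hS
    intro h0
    have := h A hA
    rw [← key, h0] at this
    simp [dot2] at this
  · simp only [dot2, Prod.smul_fst, Prod.smul_snd, Prod.fst_sub, Prod.snd_sub, smul_eq_mul]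
    ring

lemma convex_det3_nonneg (P Q : ℝ × ℝ) (ε : ℝ) : Convex ℝ {x | 0 ≤ ε * det3 P Q x} := by
  intro x hx y hy a b ha hb hab
  simp only [mem_ofPred_eq, det3_add_smul hab] at hx hy ⊢
  nlinarith [mul_nonneg ha hx, mul_nonneg hb hy]

lemma continuous_det3 (P Q : ℝ × ℝ) : Continuous (det3 P Q) := by
  simp only [funext (det3_eq P Q)]
  fun_prop

/-- Read `0 < ε * det3 X P Q` as "`Q` comes after `P` around `X`"; among points on the ε-side of
the line `X Y` this order is transitive. -/
lemma det3_pos_trans (hP : 0 < ε * det3 X Y P) (hQ : 0 < ε * det3 X Y Q)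
    (hR : 0 < ε * det3 X Y R) (hPQ : 0 < ε * det3 X P Q) (hQR : 0 < ε * det3 X Q R) :
    0 < ε * det3 X P R := by
  have key : ε * det3 X P R * (ε * det3 X Y Q)
      = ε * det3 X P Q * (ε * det3 X Y R) + ε * det3 X Q R * (ε * det3 X Y P) := by
    linear_combination ε ^ 2 * det3_mul_det3 X Y P Q R
  exact pos_of_mul_pos_left (key ▸ add_pos (mul_pos hPQ hR) (mul_pos hQR hP)) hQ.le

lemma det3_pos_of_mem_interior {s : Set (ℝ × ℝ)} (hs : s ⊆ {x | 0 ≤ ε * det3 P Q x})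
    (hy : 0 < ε * det3 P Q y) (hx : x ∈ interior s) : 0 < ε * det3 P Q x := by
  by_contra hle
  have hlim : Filter.Tendsto (fun t : ℝ ↦ (1 + t) • x + (-t) • y) (nhdsWithin 0 (Ioi 0))
      (nhds x) :=
    (Continuous.tendsto' (by fun_prop) 0 x (by simp)).mono_left nhdsWithin_le_nhds
  obtain ⟨t, hts, ht⟩ :=
    ((hlim.eventually (mem_interior_iff_mem_nhds.1 hx)).and self_mem_nhdsWithin).exists
  have := hs hts
  simp only [mem_ofPred_eq, det3_add_smul (by ring : 1 + t + -t = 1)] at this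
  nlinarith [mul_pos (mem_Ioi.1 ht) hy]

lemma apply_le_of_det3_nonneg (f : ℝ × ℝ →L[ℝ] ℝ) (hturn : 0 < ε * det3 O P Q)
    (hxO : 0 ≤ ε * det3 O P x) (hxQ : 0 ≤ ε * det3 P Q x) (hO : f O ≤ f P) (hQ : f Q ≤ f P) :
    f x ≤ f P := by
  have hdec : det3 O P Q • (x - P) = (-det3 P Q x) • (P - O) + det3 O P x • (Q - P) := by
    ext <;> simp only [det3_eq, Prod.smul_fst, Prod.smul_snd, Prod.fst_add, Prod.snd_add,
      Prod.fst_sub, Prod.snd_sub, smul_eq_mul] <;> ring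
  have key := congrArg f hdec
  simp only [map_smul, map_add, map_sub, smul_eq_mul] at key
  have hε : ε * det3 O P Q * (f x - f P)
      = -(ε * det3 P Q x) * (f P - f O) + ε * det3 O P x * (f Q - f P) := by
    linear_combination ε * key
  by_contra! hlt
  nlinarith [mul_pos hturn (sub_pos.2 hlt), mul_nonneg hxQ (sub_nonneg.2 hO),
    mul_nonneg hxO (sub_nonneg.2 hQ)]

lemma mem_segment_of_det3_eq_zero (hO : 0 < ε * det3 O P Q) (hR : 0 < ε * det3 P Q R)
    (hx : det3 P Q x = 0) (hxO : 0 ≤ ε * det3 O P x) (hxR : 0 ≤ ε * det3 Q R x) :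
    x ∈ segment ℝ P Q := by
  have hPQ : P ≠ Q := by rintro rfl; simp at hO
  obtain ⟨t, rfl⟩ := exists_lineMap_eq_of_det3_eq_zero hPQ hx
  rw [det3_lineMap, det3_self_right] at hxO
  rw [det3_lineMap, det3_self_mid, ← det3_rotate] at hxR
  rw [segment_eq_image_lineMap]
  refine ⟨t, ⟨?_, ?_⟩, rfl⟩ <;> nlinarith

lemma exists_sub_eq_mul_det3 (f : ℝ × ℝ →L[ℝ] ℝ) (hPQ : P ≠ Q) (hf : f P = f Q) :
    ∃ τ : ℝ, ∀ y, f y - f P = τ * det3 P Q y := by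
  have hrepr : ∀ y : ℝ × ℝ, f y = y.1 * f (1, 0) + y.2 * f (0, 1) := fun y ↦ by
    conv_lhs => rw [show y = y.1 • ((1 : ℝ), (0 : ℝ)) + y.2 • ((0 : ℝ), (1 : ℝ)) by ext <;> simp]
    rw [map_add, map_smul, map_smul, smul_eq_mul, smul_eq_mul]
  have hd := (sq_add_sq_sub_pos hPQ).ne'
  refine ⟨(f (0, 1) * (Q.1 - P.1) - f (1, 0) * (Q.2 - P.2)) /
    ((Q.1 - P.1) ^ 2 + (Q.2 - P.2) ^ 2), fun y ↦ ?_⟩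
  rw [hrepr P, hrepr Q] at hf
  rw [hrepr y, hrepr P, det3_eq]
  field_simp
  linear_combination (-((Q.1 - P.1) * (y.1 - P.1) + (Q.2 - P.2) * (y.2 - P.2))) * hf

lemma exists_det3_nonneg_of_midpoint_notMem_interior {C : Set (ℝ × ℝ)} (hC : Convex ℝ C)
    (hint : (interior C).Nonempty) (hP : P ∈ C) (hQ : Q ∈ C) (hPQ : P ≠ Q)
    (hM : midpoint ℝ P Q ∉ interior C) : ∃ s ≠ 0, ∀ x ∈ C, 0 ≤ s * det3 P Q x := by
  obtain ⟨f, u, hf0, hfC, hfM⟩ := geometric_hahn_banach_of_nonempty_interior hC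
    (convex_singleton _) (disjoint_singleton_right.2 hM) hint (singleton_nonempty _)
  have huM := hfM _ rfl
  rw [midpoint_eq_smul_add, map_smul, map_add, smul_eq_mul] at huM
  norm_num at huM
  have hfP := hfC P hP
  have hfQ := hfC Q hQ
  obtain ⟨τ, hτ⟩ := exists_sub_eq_mul_det3 f hPQ (by linarith)
  refine ⟨-τ, neg_ne_zero.2 ?_, fun x hx ↦ ?_⟩
  · rintro rfl
    refine hf0 (ContinuousLinearMap.ext fun y ↦ ?_)
    have h0 := hτ 0
    have hy := hτ y
    simp only [map_zero, zero_mul] at h0 hy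
    simpa using (by linarith : f y = 0)
  · nlinarith [hfC x hx, hτ x]

lemma interior_convexHull_nonempty_of_not_collinear {s : Set (ℝ × ℝ)} {C : ℝ × ℝ} (hA : A ∈ s)
    (hB : B ∈ s) (hC : C ∈ s) (h : ¬ Collinear ℝ ({A, B, C} : Set (ℝ × ℝ))) :
    (interior (convexHull ℝ s)).Nonempty := by
  rw [interior_convexHull_nonempty_iff_affineSpan_eq_top]
  have htop : affineSpan ℝ (range ![A, B, C]) = ⊤ :=
    (affineIndependent_iff_not_collinear_set.2 h).affineSpan_eq_top_iff_card_eq_finrank_add_one.2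
      (by simp)
  refine eq_top_iff.2 (htop ▸ affineSpan_mono ℝ ?_)
  rintro _ ⟨i, rfl⟩
  fin_cases i <;> assumption

end Geometry

section Chain

lemma Nat.rel_of_rel_succ_of_trans {r : ℕ → ℕ → Prop} {lo hi : ℕ}
    (hsucc : ∀ k, lo ≤ k → k < hi → r k (k + 1))
    (htrans : ∀ a b c, lo ≤ a → a < b → b < c → c ≤ hi → r a b → r b c → r a c)
    {a b : ℕ} (ha : lo ≤ a) (hab : a < b) (hb : b ≤ hi) : r a b := by
  induction b, hab using Nat.le_induction with
  | base => exact hsucc a ha (by omega)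
  | succ b hab ih =>
    exact htrans a b (b + 1) ha hab (by omega) hb (ih (by omega)) (hsucc b (by omega) (by omega))

variable {W : ℕ → ℝ × ℝ} {m : ℕ} {ε : ℝ}

lemma det3_zero_left_pos_of_fan
    (hfan : ∀ k, 1 ≤ k → k + 1 < m → 0 < ε * det3 (W 0) (W k) (W (k + 1)))
    (hbase : ∀ k, 2 ≤ k → k < m → 0 < ε * det3 (W 0) (W 1) (W k))
    {a b : ℕ} (ha : 1 ≤ a) (hab : a < b) (hb : b < m) : 0 < ε * det3 (W 0) (W a) (W b) := by
  obtain rfl | ha := eq_or_lt_of_le ha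
  · exact hbase b (by omega) hb
  refine Nat.rel_of_rel_succ_of_trans (r := fun a b ↦ 0 < ε * det3 (W 0) (W a) (W b))
    (lo := 2) (hi := m - 1) (fun k hk hkm ↦ hfan k (by omega) (by omega))
    (fun a b c ha hab hbc hc ↦ det3_pos_trans (hbase a ha (by omega)) (hbase b (by omega)
      (by omega)) (hbase c (by omega) (by omega))) ha hab (by omega)

lemma det3_succ_pos_of_fan
    (hfan : ∀ k, 1 ≤ k → k + 1 < m → 0 < ε * det3 (W 0) (W k) (W (k + 1)))
    (hbase : ∀ k, 2 ≤ k → k < m → 0 < ε * det3 (W 0) (W 1) (W k))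
    (hturn : ∀ k, 1 ≤ k → k + 2 < m → 0 < ε * det3 (W k) (W (k + 1)) (W (k + 2)))
    {k c : ℕ} (hk : 1 ≤ k) (hkc : k + 2 ≤ c) (hc : c < m) :
    0 < ε * det3 (W k) (W (k + 1)) (W c) := by
  obtain ⟨d, rfl⟩ := Nat.exists_eq_add_of_le hkc
  induction d generalizing k with
  | zero => exact hturn k hk hc
  | succ d ih =>
    have hc' : k + 2 + (d + 1) = k + 1 + 2 + d := by omega
    rw [hc'] at hc ⊢
    have hnext := ih (by omega) (by omega) hc
    -- going around `W (k + 1)`: from `W c` through `W 0` to `W k`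
    rw [det3_rotate]
    refine det3_pos_trans (Q := W 0) (Y := W (k + 2)) hnext ?_ ?_ ?_ ?_
    · rw [← det3_rotate]; exact hfan (k + 1) (by omega) (by omega)
    · rw [← det3_rotate]; exact hturn k hk (by omega)
    · rw [← det3_rotate]; exact det3_zero_left_pos_of_fan hfan hbase (by omega) (by omega) hc
    · rw [← det3_rotate, ← det3_rotate]; exact hfan k hk (by omega)

lemma det3_pos_of_fan
    (hfan : ∀ k, 1 ≤ k → k + 1 < m → 0 < ε * det3 (W 0) (W k) (W (k + 1)))
    (hbase : ∀ k, 2 ≤ k → k < m → 0 < ε * det3 (W 0) (W 1) (W k))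
    (hturn : ∀ k, 1 ≤ k → k + 2 < m → 0 < ε * det3 (W k) (W (k + 1)) (W (k + 2)))
    {a b c : ℕ} (hab : a < b) (hbc : b < c) (hc : c < m) :
    0 < ε * det3 (W a) (W b) (W c) := by
  obtain rfl | ha := Nat.eq_zero_or_pos a
  · exact det3_zero_left_pos_of_fan hfan hbase (by omega) hbc hc
  rw [← det3_rotate]
  refine Nat.rel_of_rel_succ_of_trans (r := fun a b ↦ 0 < ε * det3 (W c) (W a) (W b))
    (lo := 1) (hi := c - 1) (fun k hk hkc ↦ ?_) (fun a b d ha hab hbd hd h₁ h₂ ↦ ?_)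
    ha hab (by omega)
  · rw [det3_rotate]
    exact det3_succ_pos_of_fan hfan hbase hturn hk (by omega) hc
  · refine det3_pos_trans (Y := W 0) ?_ ?_ ?_ h₁ h₂ <;> rw [det3_rotate] <;>
      exact det3_zero_left_pos_of_fan hfan hbase (by omega) (by omega) hc

lemma exists_det3_pos_of_strictSide (hm : 4 ≤ m)
    (h : ∀ k, 1 ≤ k → k + 3 ≤ m →
      StrictSide (W k) (W (k + 1)) {W (k + 2), W 0} ∧
      StrictSide (W (k + 1)) (W (k + 2)) {W k, W 0} ∧
      StrictSide (W 0) (W 1) {W (k + 1), W (k + 2)}) :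
    ∃ ε : ℝ, ∀ a b c, a < b → b < c → c < m → 0 < ε * det3 (W a) (W b) (W c) := by
  have hsign : ∀ k, 1 ≤ k → k + 3 ≤ m →
      0 < det3 (W k) (W (k + 1)) (W 0) * det3 (W k) (W (k + 1)) (W (k + 2)) ∧
      0 < det3 (W k) (W (k + 1)) (W (k + 2)) * det3 (W (k + 1)) (W (k + 2)) (W 0) := by
    intro k hk hkm
    obtain ⟨h₁, h₂, -⟩ := h k hk hkm
    have h₁' := h₁.det3_mul_det3_pos (h₂.ne_left (mem_insert _ _)) (mem_insert _ _)
      (mem_insert_of_mem _ rfl)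
    have h₂' := h₂.det3_mul_det3_pos (h₁.ne_right (mem_insert _ _)).symm (mem_insert _ _)
      (mem_insert_of_mem _ rfl)
    rw [← det3_rotate (W k)] at h₂'
    exact ⟨mul_comm (det3 (W k) _ _) _ ▸ h₁', h₂'⟩
  set ε := det3 (W 0) (W 1) (W 2) with hε_def
  have hε : ε ≠ 0 := by
    have := (hsign 1 le_rfl (by omega)).1
    rw [← det3_rotate] at this
    exact left_ne_zero_of_mul this.ne'
  have hfan : ∀ k, 1 ≤ k → k + 1 < m → 0 < ε * det3 (W 0) (W k) (W (k + 1)) := by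
    intro k hk
    induction k, hk using Nat.le_induction with
    | base => exact fun _ ↦ mul_self_pos.2 hε
    | succ k hk ih =>
      intro hkm
      have ih := ih (by omega)
      rw [det3_rotate] at ih ⊢
      exact mul_pos_trans (mul_pos_trans ih (hsign k hk (by omega)).1) (hsign k hk (by omega)).2
  have hturn : ∀ k, 1 ≤ k → k + 2 < m → 0 < ε * det3 (W k) (W (k + 1)) (W (k + 2)) := by
    intro k hk hkm
    have := hfan k hk (by omega)
    rw [det3_rotate] at this
    exact mul_pos_trans this (hsign k hk (by omega)).1
  have h01 : W 0 ≠ W 1 := fun h01 ↦ hε (by simp [hε_def, h01])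
  have hbase : ∀ k, 2 ≤ k → k < m → 0 < ε * det3 (W 0) (W 1) (W k) := by
    intro k hk
    induction k, hk using Nat.le_induction with
    | base => exact fun _ ↦ mul_self_pos.2 hε
    | succ k hk ih =>
      intro hkm
      obtain ⟨-, -, h₃⟩ := h (k - 1) (by omega) (by omega)
      have := h₃.det3_mul_det3_pos h01 (mem_insert _ _) (mem_insert_of_mem _ rfl)
      rw [show k - 1 + 1 = k by omega, show k - 1 + 2 = k + 1 by omega] at this
      exact mul_pos_trans (ih (by omega)) this
  exact ⟨ε, fun a b c ↦ det3_pos_of_fan hfan hbase hturn⟩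

end Chain

section Polygon

variable {n : ℕ} {V : Fin n → ℝ × ℝ} {ε : ℝ}

lemma val_nxt (i : Fin n) : (nxt i).val = if i.val + 1 < n then i.val + 1 else 0 := by
  simp only [nxt]
  split_ifs with h
  · exact Nat.mod_eq_of_lt h
  · rw [show i.val + 1 = n by omega, Nat.mod_self]

lemma nxt_ne_self (hn : 2 ≤ n) (i : Fin n) : nxt i ≠ i := by
  rw [Ne, Fin.ext_iff, val_nxt]
  split_ifs <;> omega

lemma nxt_nxt_ne_self (hn : 3 ≤ n) (i : Fin n) : nxt (nxt i) ≠ i := by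
  rw [Ne, Fin.ext_iff, val_nxt, val_nxt]
  split_ifs <;> omega

lemma exists_nxt_eq (i : Fin n) : ∃ p, nxt p = i := by
  have := i.isLt
  by_cases hi : i.val = 0
  · exact ⟨⟨n - 1, by omega⟩, Fin.ext (by rw [val_nxt]; dsimp only; split_ifs <;> omega)⟩
  · exact ⟨⟨i.val - 1, by omega⟩, Fin.ext (by rw [val_nxt]; dsimp only; split_ifs <;> omega)⟩

lemma nxt_induction (hn : 0 < n) {motive : Fin n → Prop} (zero : motive ⟨0, hn⟩)
    (step : ∀ i, motive i → motive (nxt i)) (i : Fin n) : motive i := by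
  suffices ∀ k (hk : k < n), motive ⟨k, hk⟩ from this i.val i.isLt
  intro k hk
  induction k with
  | zero => exact zero
  | succ k ih =>
    have := step _ (ih (by omega))
    rwa [show nxt ⟨k, by omega⟩ = ⟨k + 1, hk⟩ from Fin.ext (by rw [val_nxt]; simp [hk])] at this

def StrictlyToOneSideWith (V : Fin n → ℝ × ℝ) (ε : ℝ) : Prop :=
  ∀ i j : Fin n, j ≠ i → j ≠ nxt i → 0 < ε * det3 (V i) (V (nxt i)) (V j)

lemma StrictlyToOneSideWith.quasiStrict (h : StrictlyToOneSideWith V ε) : QuasiStrict V :=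
  fun i j hji hjn hcol ↦ by
    simpa [det3_eq_zero_iff_collinear.2 hcol] using h i j hji hjn

lemma StrictlyToOneSideWith.convexHull_subset (h : StrictlyToOneSideWith V ε) (i : Fin n) :
    convexHull ℝ (range V) ⊆ {x | 0 ≤ ε * det3 (V i) (V (nxt i)) x} := by
  refine convexHull_min ?_ (convex_det3_nonneg _ _ _)
  rintro _ ⟨j, rfl⟩
  by_cases hji : j = i
  · simp [hji]
  by_cases hjn : j = nxt i
  · simp [hjn]
  exact (h i j hji hjn).le

lemma StrictlyToOneSideWith.iInter_subset_convexHull (hn : 3 ≤ n)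
    (h : StrictlyToOneSideWith V ε) :
    ⋂ i, {x | 0 ≤ ε * det3 (V i) (V (nxt i)) x} ⊆ convexHull ℝ (range V) := by
  intro x hx
  simp only [mem_iInter, mem_ofPred_eq] at hx
  by_contra hxV
  obtain ⟨f, u, hfV, hfx⟩ := geometric_hahn_banach_closed_point (convex_convexHull ℝ _)
    ((finite_range V).isClosed_convexHull (𝕜 := ℝ)) hxV
  have : Nonempty (Fin n) := ⟨⟨0, by omega⟩⟩
  obtain ⟨j, hj⟩ := Finite.exists_max (f ∘ V)
  obtain ⟨p, rfl⟩ := exists_nxt_eq j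
  -- `x` lies in the corner of the polygon at the vertex maximising `f`
  have hturn := h p (nxt (nxt p)) (nxt_nxt_ne_self hn p) (nxt_ne_self (by omega) _)
  have := apply_le_of_det3_nonneg f hturn (hx p) (hx (nxt p)) (hj p) (hj _)
  linarith [hfV _ (subset_convexHull ℝ _ (mem_range_self (nxt p)))]

lemma StrictlyToOneSideWith.isConvexPolygon (hn : 3 ≤ n) (h : StrictlyToOneSideWith V ε) :
    IsConvexPolygon V := by
  have hturn : ∀ i, 0 < ε * det3 (V i) (V (nxt i)) (V (nxt (nxt i))) := fun i ↦
    h i _ (nxt_nxt_ne_self hn i) (nxt_ne_self (by omega) _)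
  have hε : ε ≠ 0 := left_ne_zero_of_mul (hturn ⟨0, by omega⟩).ne'
  rw [IsConvexPolygon, ((finite_range V).isClosed_convexHull (𝕜 := ℝ)).frontier_eq]
  ext x
  simp only [mem_iUnion, mem_sdiff]
  constructor
  · rintro ⟨i, hx⟩
    refine ⟨segment_subset_convexHull (mem_range_self _) (mem_range_self _) hx, fun hint ↦ ?_⟩
    have := det3_pos_of_mem_interior (h.convexHull_subset i) (hturn i) hint
    rw [segment_eq_image_lineMap] at hx
    obtain ⟨t, -, rfl⟩ := hx
    simp [det3_lineMap] at this
  · rintro ⟨hx, hxint⟩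
    have hxH : ∀ i, 0 ≤ ε * det3 (V i) (V (nxt i)) x := fun i ↦ h.convexHull_subset i hx
    by_contra! hseg
    set U := ⋂ i, {x | 0 < ε * det3 (V i) (V (nxt i)) x}
    have hUV : U ⊆ convexHull ℝ (range V) := fun y hy ↦
      h.iInter_subset_convexHull hn (mem_iInter.2 fun i ↦ mem_ofPred_eq ▸ (mem_iInter.1 hy i).le)
    have hU : IsOpen U := isOpen_iInter_of_finite fun i ↦
      isOpen_lt continuous_const (continuous_const.mul (continuous_det3 _ _))
    refine hxint (interior_maximal hUV hU (mem_iInter.2 fun i ↦ ?_))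
    refine (hxH i).lt_of_ne' fun h0 ↦ hseg i ?_
    obtain ⟨p, rfl⟩ := exists_nxt_eq i
    exact mem_segment_of_det3_eq_zero (hturn p) (hturn (nxt p))
      ((mul_eq_zero.1 h0).resolve_left hε) (hxH p) (hxH (nxt (nxt p)))

lemma strictlyToOneSideWith_of_det3_pos
    (h : ∀ a b c : Fin n, a < b → b < c → 0 < ε * det3 (V a) (V b) (V c)) :
    StrictlyToOneSideWith V ε := by
  intro i j hji hjn
  have hv := val_nxt i
  rw [Ne, Fin.ext_iff] at hji hjn
  simp only [Fin.lt_def] at h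
  split_ifs at hv with hi
  · rcases lt_or_gt_of_ne hji with hj | hj
    · rw [← det3_rotate]
      exact h j i (nxt i) hj (by omega)
    · exact h i (nxt i) j (by omega) (by omega)
  · rw [det3_rotate]
    exact h (nxt i) j i (by omega) (by omega)

lemma exists_strictlyToOneSideWith_of_forall_edge (hn : 3 ≤ n)
    (h : ∀ i : Fin n, ∃ s : ℝ, ∀ j, j ≠ i → j ≠ nxt i → 0 < s * det3 (V i) (V (nxt i)) (V j)) :
    ∃ ε, StrictlyToOneSideWith V ε := by
  choose s hs using h
  have hturn : ∀ i, 0 < s i * det3 (V i) (V (nxt i)) (V (nxt (nxt i))) := fun i ↦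
    hs i _ (nxt_nxt_ne_self hn i) (nxt_ne_self (by omega) _)
  have hsame : ∀ i, 0 < s ⟨0, by omega⟩ * s i := by
    refine nxt_induction (by omega) (mul_self_pos.2 (left_ne_zero_of_mul (hturn _).ne'))
      fun i hi ↦ ?_
    -- the edges at `V (nxt i)` both see the triangle `V i, V (nxt i), V (nxt (nxt i))`
    have hnext := hs (nxt i) i (nxt_ne_self (by omega) i).symm (nxt_nxt_ne_self hn i).symm
    rw [← det3_rotate, mul_comm] at hnext
    exact mul_pos_trans hi (mul_pos_trans (hturn i) hnext)
  exact ⟨s ⟨0, by omega⟩, fun i j hji hjn ↦ mul_pos_trans (hsame i) (hs i j hji hjn)⟩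

lemma IsConvexPolygon.exists_strictlyToOneSideWith (hn : 3 ≤ n) (hconv : IsConvexPolygon V)
    (hqs : QuasiStrict V) : ∃ ε, StrictlyToOneSideWith V ε := by
  have hdet : ∀ i j, j ≠ i → j ≠ nxt i → det3 (V i) (V (nxt i)) (V j) ≠ 0 :=
    fun i j hji hjn h0 ↦ hqs i j hji hjn (det3_eq_zero_iff_collinear.1 h0)
  have hint : (interior (convexHull ℝ (range V))).Nonempty :=
    have i : Fin n := ⟨0, by omega⟩
    interior_convexHull_nonempty_of_not_collinear (mem_range_self i) (mem_range_self (nxt i))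
      (mem_range_self (nxt (nxt i))) (hqs i _ (nxt_nxt_ne_self hn i) (nxt_ne_self (by omega) _))
  refine exists_strictlyToOneSideWith_of_forall_edge hn fun i ↦ ?_
  have hne : V i ≠ V (nxt i) := fun h ↦
    hdet i _ (nxt_nxt_ne_self hn i) (nxt_ne_self (by omega) _) (by simp [h])
  have hM : midpoint ℝ (V i) (V (nxt i)) ∉ interior (convexHull ℝ (range V)) :=
    (hconv ▸ mem_iUnion.2 ⟨i, midpoint_mem_segment _ _⟩ : _ ∈ frontier _).2
  obtain ⟨s, hs0, hs⟩ := exists_det3_nonneg_of_midpoint_notMem_interior (convex_convexHull ℝ _)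
    hint (subset_convexHull ℝ _ (mem_range_self i))
    (subset_convexHull ℝ _ (mem_range_self (nxt i))) hne hM
  exact ⟨s, fun j hji hjn ↦ (hs _ (subset_convexHull ℝ _ (mem_range_self j))).lt_of_ne
    (mul_ne_zero hs0 (hdet i j hji hjn)).symm⟩

end Polygon

def LocalSideConditions {n : ℕ} (hn : 4 ≤ n) (V : Fin n → ℝ × ℝ) : Prop :=
  ∀ i : Fin n, 2 ≤ i.val → i.val ≤ n - 2 →
    StrictSide (V ⟨i.val - 1, lt_of_le_of_lt (Nat.sub_le _ _) i.isLt⟩) (V i)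
      {V (nxt i), V ⟨0, Nat.zero_lt_of_lt hn⟩} ∧
    StrictSide (V i) (V (nxt i))
      {V ⟨i.val - 1, lt_of_le_of_lt (Nat.sub_le _ _) i.isLt⟩, V ⟨0, Nat.zero_lt_of_lt hn⟩} ∧
    StrictSide (V ⟨0, Nat.zero_lt_of_lt hn⟩) (V ⟨1, Nat.lt_of_lt_of_le (by decide) hn⟩)
      {V i, V (nxt i)}

section SideConditions

variable {n : ℕ} {V : Fin n → ℝ × ℝ} {ε : ℝ}

lemma StrictlyToOneSideWith.localSideConditions (hn : 4 ≤ n) (h : StrictlyToOneSideWith V ε) :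
    LocalSideConditions hn V := by
  have hside : ∀ k k' a b : Fin n, nxt k = k' → a ≠ k → a ≠ k' → b ≠ k → b ≠ k' →
      StrictSide (V k) (V k') {V a, V b} := by
    rintro k _ a b rfl ha ha' hb hb'
    exact strictSide_of_det3_pos (insert_nonempty _ _)
      (by rintro _ (rfl | rfl) <;> apply h <;> assumption)
  intro i hi hin
  have hi' : nxt ⟨i.val - 1, by omega⟩ = i :=
    Fin.ext (by rw [val_nxt]; dsimp only; split_ifs <;> omega)
  have h01 : nxt ⟨0, by omega⟩ = (⟨1, by omega⟩ : Fin n) :=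
    Fin.ext (by rw [val_nxt]; dsimp only; split_ifs <;> omega)
  have hv : (nxt i).val = i.val + 1 := by rw [val_nxt, if_pos (by omega)]
  refine ⟨hside _ i (nxt i) ⟨0, by omega⟩ hi' ?_ ?_ ?_ ?_,
    hside i (nxt i) _ ⟨0, by omega⟩ rfl ?_ ?_ ?_ ?_, hside _ _ i (nxt i) h01 ?_ ?_ ?_ ?_⟩
  all_goals simp only [ne_eq, Fin.ext_iff, hv]; omega

lemma LocalSideConditions.exists_strictlyToOneSideWith (hn : 4 ≤ n)
    (h : LocalSideConditions hn V) : ∃ ε, StrictlyToOneSideWith V ε := by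
  set W : ℕ → ℝ × ℝ := fun k ↦ V ⟨k % n, Nat.mod_lt _ (by omega)⟩
  have hVW : ∀ k (hk : k < n), V ⟨k, hk⟩ = W k := fun k hk ↦
    congrArg V (Fin.ext (Nat.mod_eq_of_lt hk).symm)
  obtain ⟨ε, hε⟩ := exists_det3_pos_of_strictSide (W := W) hn fun k hk hkn ↦ by
    obtain ⟨h₁, h₂, h₃⟩ := h ⟨k + 1, by omega⟩ (by dsimp only; omega) (by dsimp only; omega)
    have hnxt : (nxt ⟨k + 1, by omega⟩ : Fin n).val = k + 2 := by
      rw [val_nxt, if_pos (by dsimp only; omega)]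
    simp (disch := omega) only [hVW, hnxt, Nat.add_sub_cancel] at h₁ h₂ h₃
    exact ⟨h₁, h₂, h₃⟩
  refine ⟨ε, strictlyToOneSideWith_of_det3_pos fun a b c hab hbc ↦ ?_⟩
  simpa only [W, Fin.eta, Nat.mod_eq_of_lt, Fin.is_lt] using hε a b c hab hbc c.isLt

end SideConditions

/-- Pinelis, Lemma 4: an n-gon with n ≥ 4 is quasi-strictly convex iff the
3(n−3) strict one-side conditions hold for all i ∈ {2,…,n−2}. -/
theorem stmt_6 (n : ℕ) (hn : 4 ≤ n) (V : Fin n → ℝ × ℝ) :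
    (IsConvexPolygon V ∧ QuasiStrict V) ↔
      (∀ i : Fin n, 2 ≤ i.val → i.val ≤ n - 2 →
        StrictSide (V ⟨i.val - 1, lt_of_le_of_lt (Nat.sub_le _ _) i.isLt⟩) (V i)
          {V (nxt i), V ⟨0, by omega⟩} ∧
        StrictSide (V i) (V (nxt i))
          {V ⟨i.val - 1, lt_of_le_of_lt (Nat.sub_le _ _) i.isLt⟩, V ⟨0, by omega⟩} ∧
        StrictSide (V ⟨0, by omega⟩) (V ⟨1, by omega⟩) {V i, V (nxt i)}) := by
  constructor
  · rintro ⟨hconv, hqs⟩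
    obtain ⟨ε, h⟩ := hconv.exists_strictlyToOneSideWith (by omega) hqs
    exact h.localSideConditions hn
  · intro h
    obtain ⟨ε, h⟩ := LocalSideConditions.exists_strictlyToOneSideWith hn h
    exact ⟨h.isConvexPolygon (by omega), h.quasiStrict⟩
end

section
/- Let k ≥ 3 and let (V_0, …, V_{k−1}) be a quasi-strict k-gon in the plane. Then there exists a point V_k such that the (k+1)-gon (V_0, …, V_{k−1}, V_k) is quasi-strict and satisfies: V_k and V_0 lie strictly to one side of [V_{k−2}, V_{k−1}]; V_{k−2} and V_0 lie strictly to one side of [V_{k−1}, V_k]; and V_{k−1} and V_k lie strictly to one side of [V_0, V_1]. -/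
open Filter Set Topology

namespace Stmt16Aux

def d2 (u v : ℝ × ℝ) : ℝ := u.1 * v.2 - u.2 * v.1
noncomputable def perp (u : ℝ × ℝ) : ℝ × ℝ := (-u.2, u.1)

lemma d2_aff (u v w : ℝ × ℝ) (t : ℝ) : d2 (u + t • v) w = d2 u w + t * d2 v w := by
  simp [d2, Prod.fst_add, Prod.snd_add, Prod.smul_fst, Prod.smul_snd, smul_eq_mul]; ring

lemma d2_aff_right (u v w : ℝ × ℝ) (t : ℝ) : d2 u (v + t • w) = d2 u v + t * d2 u w := by
  simp [d2, Prod.fst_add, Prod.snd_add, Prod.smul_fst, Prod.smul_snd, smul_eq_mul]; ring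

lemma dot2_aff_right (u v w : ℝ × ℝ) (t : ℝ) : dot2 u (v + t • w) = dot2 u v + t * dot2 u w := by
  simp [dot2, Prod.fst_add, Prod.snd_add, Prod.smul_fst, Prod.smul_snd, smul_eq_mul]; ring

lemma d2_smul_left (c : ℝ) (u v : ℝ × ℝ) : d2 (c • u) v = c * d2 u v := by
  simp [d2, Prod.smul_fst, Prod.smul_snd, smul_eq_mul]; ring

lemma d2_smul_right (c : ℝ) (u v : ℝ × ℝ) : d2 u (c • v) = c * d2 u v := by
  simp [d2, Prod.smul_fst, Prod.smul_snd, smul_eq_mul]; ring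

lemma dot2_smul_left (c : ℝ) (u v : ℝ × ℝ) : dot2 (c • u) v = c * dot2 u v := by
  simp [dot2, Prod.smul_fst, Prod.smul_snd, smul_eq_mul]; ring

lemma dot2_smul_right (c : ℝ) (u v : ℝ × ℝ) : dot2 u (c • v) = c * dot2 u v := by
  simp [dot2, Prod.smul_fst, Prod.smul_snd, smul_eq_mul]; ring

lemma dot2_perp (u v : ℝ × ℝ) : dot2 (perp u) v = d2 u v := by
  simp [dot2, d2, perp]; ring

lemma d2_self (u : ℝ × ℝ) : d2 u u = 0 := by simp [d2]; ring

lemma d2_anti (u v : ℝ × ℝ) : d2 u v = - d2 v u := by simp [d2]; ring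

lemma d2_zero_left (v : ℝ × ℝ) : d2 0 v = 0 := by simp [d2]

lemma d2_zero_right (v : ℝ × ℝ) : d2 v 0 = 0 := by simp [d2]

lemma perp_ne_zero {u : ℝ × ℝ} (hu : u ≠ 0) : perp u ≠ 0 := by
  intro h
  apply hu
  have h1 := congrArg Prod.fst h
  have h2 := congrArg Prod.snd h
  simp [perp] at h1 h2
  exact Prod.ext h2 h1

lemma nondeg (dv u : ℝ × ℝ) (hd : dv ≠ 0) (hu : u ≠ 0) :
    d2 dv u ≠ 0 ∨ d2 (perp dv) u ≠ 0 := by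
  by_contra hcon
  push_neg at hcon
  obtain ⟨h1, h2⟩ := hcon
  have e1 : dv.1 * u.2 - dv.2 * u.1 = 0 := h1
  have e2 : (-dv.2) * u.2 - dv.1 * u.1 = 0 := h2
  have hdd : 0 < dv.1 * dv.1 + dv.2 * dv.2 := by
    rcases (by
      by_contra hcon2; push_neg at hcon2
      exact hd (Prod.ext hcon2.1 hcon2.2) : dv.1 ≠ 0 ∨ dv.2 ≠ 0) with h | h
    · nlinarith [mul_self_pos.mpr h, mul_self_nonneg dv.2]
    · nlinarith [mul_self_pos.mpr h, mul_self_nonneg dv.1]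
  apply hu
  have hu1 : u.1 * (dv.1 * dv.1 + dv.2 * dv.2) = 0 := by linear_combination (-dv.1) * e2 - dv.2 * e1
  have hu2 : u.2 * (dv.1 * dv.1 + dv.2 * dv.2) = 0 := by linear_combination (-dv.2) * e2 + dv.1 * e1
  have h1' : u.1 = 0 := by
    rcases mul_eq_zero.mp hu1 with h | h
    · exact h
    · exact absurd h (ne_of_gt hdd)
  have h2' : u.2 = 0 := by
    rcases mul_eq_zero.mp hu2 with h | h
    · exact h
    · exact absurd h (ne_of_gt hdd)
  exact Prod.ext h1' h2'

lemma aff_ne (c e : ℝ) (h : c ≠ 0 ∨ e ≠ 0) :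
    ∀ᶠ t in 𝓝[>] (0:ℝ), c + t * e ≠ 0 := by
  rcases eq_or_ne c 0 with rfl | hc
  · have he : e ≠ 0 := by tauto
    filter_upwards [self_mem_nhdsWithin] with t ht
    have h1 : (t:ℝ) ≠ 0 := ne_of_gt ht
    simpa using mul_ne_zero h1 he
  · have hcont : Tendsto (fun t : ℝ => c + t * e) (𝓝 0) (𝓝 c) := by
      have h2 : Continuous fun t : ℝ => c + t * e := by continuity
      simpa using h2.tendsto 0
    exact (hcont.eventually_ne hc).filter_mono nhdsWithin_le_nhds

lemma aff_pos (c e : ℝ) (h : 0 < c) :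
    ∀ᶠ t in 𝓝[>] (0:ℝ), 0 < c + t * e := by
  have hcont : Tendsto (fun t : ℝ => c + t * e) (𝓝 0) (𝓝 c) := by
    have h2 : Continuous fun t : ℝ => c + t * e := by continuity
    simpa using h2.tendsto 0
  exact (hcont.eventually (eventually_gt_nhds h)).filter_mono nhdsWithin_le_nhds

lemma collinear_iff_d2 (P Q R : ℝ × ℝ) :
    Collinear ℝ ({P, Q, R} : Set (ℝ × ℝ)) ↔ d2 (Q - P) (R - P) = 0 := by
  constructor
  · intro hc
    rw [collinear_iff_of_mem (Set.mem_insert P {Q, R})] at hc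
    obtain ⟨v, hv⟩ := hc
    obtain ⟨cq, hq⟩ := hv Q (by simp)
    obtain ⟨cr, hr⟩ := hv R (by simp)
    have hq' : Q - P = cq • v := by rw [hq]; simp
    have hr' : R - P = cr • v := by rw [hr]; simp
    rw [hq', hr']
    simp [d2]
    ring
  · intro h0
    rcases eq_or_ne Q P with rfl | hQP
    · have hs : ({Q, Q, R} : Set (ℝ × ℝ)) = {Q, R} := by simp
      rw [hs]; exact collinear_pair ℝ Q R
    · have hu : Q - P ≠ 0 := sub_ne_zero_of_ne hQP
      rw [collinear_iff_of_mem (Set.mem_insert P {Q, R})]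
      refine ⟨Q - P, ?_⟩
      have key : ∀ x : ℝ × ℝ, d2 (Q - P) (x - P) = 0 → ∃ cx : ℝ, x = cx • (Q - P) +ᵥ P := by
        intro x hx
        have hx' : (Q.1 - P.1) * (x.2 - P.2) - (Q.2 - P.2) * (x.1 - P.1) = 0 := hx
        have h1 : (Q.1 - P.1) ≠ 0 ∨ (Q.2 - P.2) ≠ 0 := by
          by_contra hcon; push_neg at hcon
          apply hu
          exact Prod.ext (by simpa using hcon.1) (by simpa using hcon.2)
        have goal : ∃ cx : ℝ, x - P = cx • (Q - P) := by
          rcases h1 with h1 | h1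
          · refine ⟨(x.1 - P.1) / (Q.1 - P.1), Prod.ext ?_ ?_⟩
            · show x.1 - P.1 = (x.1 - P.1) / (Q.1 - P.1) * (Q.1 - P.1)
              field_simp
            · show x.2 - P.2 = (x.1 - P.1) / (Q.1 - P.1) * (Q.2 - P.2)
              field_simp
              linear_combination hx'
          · refine ⟨(x.2 - P.2) / (Q.2 - P.2), Prod.ext ?_ ?_⟩
            · show x.1 - P.1 = (x.2 - P.2) / (Q.2 - P.2) * (Q.1 - P.1)
              field_simp
              linear_combination -hx'
            · show x.2 - P.2 = (x.2 - P.2) / (Q.2 - P.2) * (Q.2 - P.2)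
              field_simp
        obtain ⟨cx, hcx⟩ := goal
        exact ⟨cx, by rw [vadd_eq_add, ← hcx]; ring⟩
      intro p hp
      rcases hp with rfl | rfl | rfl
      · exact ⟨0, by simp⟩
      · exact ⟨1, by rw [vadd_eq_add]; simp⟩
      · exact key _ h0

lemma snoc_eval {k : ℕ} (V : Fin k → ℝ × ℝ) (W : ℝ × ℝ) (j : Fin (k+1)) (m : ℕ)
    (hm : m < k) (hjm : j.val = m) : (Fin.snoc V W : Fin (k+1) → ℝ × ℝ) j = V ⟨m, hm⟩ := by
  have hj : j = Fin.castSucc ⟨m, hm⟩ := by apply Fin.ext; simpa using hjm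
  rw [hj, Fin.snoc_castSucc]

lemma snoc_evalW {k : ℕ} (V : Fin k → ℝ × ℝ) (W : ℝ × ℝ) (j : Fin (k+1))
    (hjm : j.val = k) : (Fin.snoc V W : Fin (k+1) → ℝ × ℝ) j = W := by
  have hj : j = Fin.last k := by apply Fin.ext; simpa using hjm
  rw [hj, Fin.snoc_last]

lemma nxt_eq {n : ℕ} (i : Fin n) (m : ℕ) (hm : m < n) (h : (i.val + 1) % n = m) :
    nxt i = ⟨m, hm⟩ := by apply Fin.ext; simpa [nxt] using h

end Stmt16Aux

open Stmt16Aux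

/-- Part (i) of the minimality sublemma: any quasi-strict k-gon (k ≥ 3) can be
extended by a vertex `W` so that the (k+1)-gon is quasi-strict and satisfies
(C1_{k-1}), (C2_{k-1}), (C3_{k-1}). -/
theorem stmt_16 (k : ℕ) (hk : 3 ≤ k) (V : Fin k → ℝ × ℝ) (h : QuasiStrict V) :
    ∃ W : ℝ × ℝ,
      QuasiStrict (Fin.snoc V W : Fin (k + 1) → ℝ × ℝ) ∧
      StrictSide (V ⟨k - 2, by omega⟩) (V ⟨k - 1, by omega⟩) {W, V ⟨0, by omega⟩} ∧
      StrictSide (V ⟨k - 1, by omega⟩) W {V ⟨k - 2, by omega⟩, V ⟨0, by omega⟩} ∧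
      StrictSide (V ⟨0, by omega⟩) (V ⟨1, by omega⟩) {V ⟨k - 1, by omega⟩, W} := by
  have hk2 : k - 2 < k := by omega
  have hk1 : k - 1 < k := by omega
  have h0k : 0 < k := by omega
  have h1k : 1 < k := by omega
  -- name the four relevant vertices
  set p := V ⟨k-2, hk2⟩ with hp
  set q := V ⟨k-1, hk1⟩ with hq
  set r := V ⟨0, h0k⟩ with hr
  set s := V ⟨1, h1k⟩ with hs
  set a := p - q with ha
  set b := r - q with hb
  -- nxt computations in Fin k
  have e2 : nxt (⟨k-2, hk2⟩ : Fin k) = ⟨k-1, hk1⟩ :=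
    nxt_eq _ _ _ (by show (k-2+1) % k = k-1; rw [Nat.mod_eq_of_lt (by omega)]; omega)
  have e0 : nxt (⟨0, h0k⟩ : Fin k) = ⟨1, h1k⟩ :=
    nxt_eq _ _ _ (by show (0+1) % k = 1; rw [Nat.mod_eq_of_lt (by omega)])
  have e1 : nxt (⟨k-1, hk1⟩ : Fin k) = ⟨0, h0k⟩ :=
    nxt_eq _ _ _ (by show (k-1+1) % k = 0
                     have hx : k - 1 + 1 = k := by omega
                     rw [hx, Nat.mod_self])
  -- basic noncollinearity facts
  have hA : ¬ Collinear ℝ ({p, q, r} : Set (ℝ × ℝ)) := by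
    have := h ⟨k-2, hk2⟩ ⟨0, h0k⟩ (by intro he; rw [Fin.mk.injEq] at he; omega)
      (by rw [e2]; intro he; rw [Fin.mk.injEq] at he; omega)
    rwa [e2] at this
  rw [collinear_iff_d2] at hA
  have hab : d2 a b ≠ 0 := by
    intro hc
    apply hA
    rw [ha, hb] at hc
    have : d2 (q - p) (r - p) = - d2 (p - q) (r - q) := by
      simp [d2]; ring
    rw [this, hc, neg_zero]
  have hB : ¬ Collinear ℝ ({r, s, q} : Set (ℝ × ℝ)) := by
    have := h ⟨0, h0k⟩ ⟨k-1, hk1⟩ (by intro he; rw [Fin.mk.injEq] at he; omega)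
      (by rw [e0]; intro he; rw [Fin.mk.injEq] at he; omega)
    rwa [e0] at this
  rw [collinear_iff_d2] at hB
  have hF2 : d2 (s - r) (q - r) ≠ 0 := hB
  -- all vertices differ from q, and from r
  have hFq : ∀ j : Fin k, j ≠ ⟨k-1, hk1⟩ → V j ≠ q := by
    intro j hj heq
    by_cases hj0 : j = ⟨0, h0k⟩
    · apply hab
      have hbz : b = 0 := by
        rw [hb, sub_eq_zero, hr, ← hj0]; exact heq
      rw [hbz]; exact d2_zero_right a
    · have hC := h ⟨k-1, hk1⟩ j hj (by rw [e1]; exact hj0)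
      rw [e1, collinear_iff_d2] at hC
      apply hC
      rw [heq, hq, sub_self]; exact d2_zero_right _
  have hFr : ∀ j : Fin k, j ≠ ⟨0, h0k⟩ → V j ≠ r := by
    intro j hj heq
    by_cases hjq : j = ⟨k-1, hk1⟩
    · apply hab
      have hbz : b = 0 := by
        rw [hb, sub_eq_zero, hq, ← hjq]; exact heq.symm
      rw [hbz]; exact d2_zero_right a
    · have hC := h ⟨k-1, hk1⟩ j hjq (by rw [e1]; exact hj)
      rw [e1, collinear_iff_d2] at hC
      apply hC
      rw [heq, hr]
      exact d2_self _
  -- the base direction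
  set d0 := b - a with hd0def
  have hd0 : d0 ≠ 0 := by
    intro hz
    apply hab
    have hba : b = a := by rwa [hd0def, sub_eq_zero] at hz
    rw [hba]; exact d2_self a
  set K := d2 b a with hKdef
  have hK : K ≠ 0 := by
    rw [hKdef]
    intro hz
    apply hab
    rw [d2_anti, hz, neg_zero]
  have hda : d2 d0 a = K := by rw [hd0def, hKdef]; simp [d2]; ring
  have hdb : d2 d0 b = K := by rw [hd0def, hKdef]; simp [d2]; ring
  have hda' : d2 a d0 = d2 a b := by rw [hd0def]; simp [d2]; ring
  -- stage 1 : choose a generic direction d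
  have hE1 : ∀ᶠ t in 𝓝[>] (0:ℝ), ∀ j : Fin k,
      V j ≠ q → d2 (d0 + t • perp d0) (V j - q) ≠ 0 := by
    rw [Filter.eventually_all]
    intro j
    by_cases hj : V j = q
    · filter_upwards with t hne; exact absurd hj hne
    · have hu : V j - q ≠ 0 := sub_ne_zero_of_ne hj
      filter_upwards [aff_ne _ _ (nondeg d0 (V j - q) hd0 hu)] with t ht _
      rw [d2_aff]; exact ht
  have hE2 : ∀ᶠ t in 𝓝[>] (0:ℝ), ∀ j : Fin k,
      V j ≠ r → d2 (d0 + t • perp d0) (V j - r) ≠ 0 := by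
    rw [Filter.eventually_all]
    intro j
    by_cases hj : V j = r
    · filter_upwards with t hne; exact absurd hj hne
    · have hu : V j - r ≠ 0 := sub_ne_zero_of_ne hj
      filter_upwards [aff_ne _ _ (nondeg d0 (V j - r) hd0 hu)] with t ht _
      rw [d2_aff]; exact ht
  have hE3a : ∀ᶠ t in 𝓝[>] (0:ℝ), 0 < d2 (d0 + t • perp d0) a * K := by
    filter_upwards [aff_pos (K * K) (d2 (perp d0) a * K) (mul_self_pos.mpr hK)] with t ht
    have hx : (K + t * d2 (perp d0) a) * K = K * K + t * (d2 (perp d0) a * K) := by ring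
    rw [d2_aff, hda, hx]; exact ht
  have hE3b : ∀ᶠ t in 𝓝[>] (0:ℝ), 0 < d2 (d0 + t • perp d0) b * K := by
    filter_upwards [aff_pos (K * K) (d2 (perp d0) b * K) (mul_self_pos.mpr hK)] with t ht
    have hx : (K + t * d2 (perp d0) b) * K = K * K + t * (d2 (perp d0) b * K) := by ring
    rw [d2_aff, hdb, hx]; exact ht
  have hE4 : ∀ᶠ t in 𝓝[>] (0:ℝ), 0 < d2 a b * d2 a (d0 + t • perp d0) := by
    filter_upwards [aff_pos (d2 a b * d2 a b) (d2 a b * d2 a (perp d0))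
      (mul_self_pos.mpr hab)] with t ht
    have hx : d2 a b * (d2 a b + t * d2 a (perp d0)) =
        d2 a b * d2 a b + t * (d2 a b * d2 a (perp d0)) := by ring
    rw [d2_aff_right, hda', hx]; exact ht
  obtain ⟨t, ht1, ht2, ht3a, ht3b, ht4⟩ :=
    (hE1.and (hE2.and (hE3a.and (hE3b.and hE4)))).exists
  set d := d0 + t • perp d0 with hddef
  have hdne : d2 d a ≠ 0 := by
    intro hz; rw [hz] at ht3a; simp at ht3a
  have hdnz : d ≠ 0 := by
    intro hz; apply hdne; rw [hz]; exact d2_zero_left a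
  -- stage 2 : choose ε
  have hsplit : ∀ (ε : ℝ) (x : ℝ × ℝ), q + ε • d - x = (q - x) + ε • d := by
    intro ε x; rw [add_sub_right_comm]
  have hG1 : ∀ᶠ ε in 𝓝[>] (0:ℝ), ∀ i : Fin k, (i : ℕ) < k - 1 →
      d2 (V (nxt i) - V i) (q + ε • d - V i) ≠ 0 := by
    rw [Filter.eventually_all]
    intro i
    by_cases hi : (i : ℕ) < k - 1
    swap
    · filter_upwards with ε hi'; exact absurd hi' hi
    · have hcore : d2 (V (nxt i) - V i) (q - V i) ≠ 0 ∨ d2 (V (nxt i) - V i) d ≠ 0 := by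
        by_cases hi2 : (i : ℕ) = k - 2
        · right
          have hieq : i = ⟨k-2, hk2⟩ := Fin.ext hi2
          rw [hieq, e2, ← hq, ← hp]
          have hfoo : d2 (q - p) d = d2 d a := by rw [ha]; simp [d2]; ring
          rw [hfoo]
          exact hdne
        · left
          have hnxti : nxt i = ⟨(i:ℕ)+1, by omega⟩ :=
            nxt_eq _ _ _ (Nat.mod_eq_of_lt (by omega))
          have hC := h i ⟨k-1, hk1⟩
            (by intro he; have := congrArg Fin.val he; simp at this; omega)
            (by rw [hnxti]; intro he; have := congrArg Fin.val he; simp at this; omega)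
          rw [collinear_iff_d2] at hC
          rw [hq]
          exact hC
      filter_upwards [aff_ne _ _ hcore] with ε hε _
      rw [hsplit, d2_aff_right]; exact hε
  have hG2 : ∀ᶠ ε in 𝓝[>] (0:ℝ), ∀ j : Fin k, j ≠ ⟨0, h0k⟩ →
      d2 (q + ε • d - r) (V j - r) ≠ 0 := by
    rw [Filter.eventually_all]
    intro j
    by_cases hj : j = ⟨0, h0k⟩
    · filter_upwards with ε hj'; exact absurd hj hj'
    · have he : d2 d (V j - r) ≠ 0 := ht2 j (hFr j hj)
      filter_upwards [aff_ne (d2 (q - r) (V j - r)) (d2 d (V j - r)) (Or.inr he)]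
        with ε hε _
      rw [hsplit, d2_aff]; exact hε
  set m3 := (d2 (s - r) (q - r)) • perp (s - r) with hm3
  have hc3 : 0 < dot2 m3 (q - r) := by
    rw [hm3, dot2_smul_left, dot2_perp]; exact mul_self_pos.mpr hF2
  have hG3 : ∀ᶠ ε in 𝓝[>] (0:ℝ), 0 < dot2 m3 (q + ε • d - r) := by
    filter_upwards [aff_pos _ (dot2 m3 d) hc3] with ε hε
    rw [hsplit, dot2_aff_right]; exact hε
  have hpos : ∀ᶠ ε in 𝓝[>] (0:ℝ), 0 < ε := by
    filter_upwards [self_mem_nhdsWithin] with x hx; exact hx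
  obtain ⟨ε, hεpos, hG1, hG2, hG3⟩ := (hpos.and (hG1.and (hG2.and hG3))).exists
  refine ⟨q + ε • d, ?_, ?_, ?_, ?_⟩
  · -- QuasiStrict of the extended polygon
    intro i j hji hjn
    by_cases hik : (i : ℕ) = k
    · -- i is the new last vertex : edge (W, V 0)
      have hnxti : nxt i = ⟨0, by omega⟩ := nxt_eq _ _ _ (by rw [hik, Nat.mod_self])
      have hUi : (Fin.snoc V (q + ε • d) : Fin (k+1) → ℝ × ℝ) i = q + ε • d := snoc_evalW _ _ _ hik
      have hUn : (Fin.snoc V (q + ε • d) : Fin (k+1) → ℝ × ℝ) (nxt i) = V ⟨0, h0k⟩ := by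
        rw [hnxti]; exact snoc_eval _ _ _ 0 h0k rfl
      have hjk : (j : ℕ) < k := by
        have h1 := j.isLt
        have hne : (j : ℕ) ≠ k := fun hv => hji (Fin.ext (by rw [hv, hik]))
        omega
      have hj0 : (j : ℕ) ≠ 0 := fun hv => hjn (by rw [hnxti]; exact Fin.ext hv)
      have hUj : (Fin.snoc V (q + ε • d) : Fin (k+1) → ℝ × ℝ) j = V ⟨(j:ℕ), hjk⟩ := snoc_eval _ _ _ _ hjk rfl
      rw [hUi, hUn, hUj, ← hr]
      have hset : ({q + ε • d, r, V ⟨(j:ℕ), hjk⟩} : Set (ℝ × ℝ)) =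
          {r, q + ε • d, V ⟨(j:ℕ), hjk⟩} := Set.insert_comm _ _ _
      rw [hset, collinear_iff_d2]
      exact hG2 ⟨(j:ℕ), hjk⟩ (by intro he; have hvv := congrArg Fin.val he; exact hj0 hvv)
    · by_cases hik1 : (i : ℕ) = k - 1
      · -- edge (V (k-1), W)
        have hnxti : nxt i = ⟨k, by omega⟩ := nxt_eq _ _ _ (by
          rw [hik1]
          have hx : k - 1 + 1 = k := by omega
          rw [hx, Nat.mod_eq_of_lt (by omega)])
        have hUi : (Fin.snoc V (q + ε • d) : Fin (k+1) → ℝ × ℝ) i = V ⟨k-1, hk1⟩ := snoc_eval _ _ _ _ hk1 hik1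
        have hUn : (Fin.snoc V (q + ε • d) : Fin (k+1) → ℝ × ℝ) (nxt i) = q + ε • d := by
          rw [hnxti]; exact snoc_evalW _ _ _ rfl
        have hjk : (j : ℕ) < k := by
          have h1 := j.isLt
          have hne : (j : ℕ) ≠ k := fun hv => hjn (by rw [hnxti]; exact Fin.ext hv)
          omega
        have hjk1 : (j : ℕ) ≠ k - 1 := fun hv => hji (Fin.ext (by rw [hv, hik1]))
        have hUj : (Fin.snoc V (q + ε • d) : Fin (k+1) → ℝ × ℝ) j = V ⟨(j:ℕ), hjk⟩ := snoc_eval _ _ _ _ hjk rfl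
        rw [hUi, hUn, hUj, ← hq, collinear_iff_d2]
        have hWq : q + ε • d - q = ε • d := add_sub_cancel_left q (ε • d)
        rw [hWq, d2_smul_left]
        exact mul_ne_zero (ne_of_gt hεpos)
          (ht1 ⟨(j:ℕ), hjk⟩ (hFq _ (by intro he; have hvv := congrArg Fin.val he; exact hjk1 hvv)))
      · -- an old edge
        have hilt : (i : ℕ) < k - 1 := by have h1 := i.isLt; omega
        have hi1k : (i : ℕ) + 1 < k := by omega
        have hikk : (i : ℕ) < k := by omega
        have hnxti : nxt i = ⟨(i:ℕ)+1, by omega⟩ :=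
          nxt_eq _ _ _ (Nat.mod_eq_of_lt (by omega))
        have hUi : (Fin.snoc V (q + ε • d) : Fin (k+1) → ℝ × ℝ) i = V ⟨(i:ℕ), hikk⟩ := snoc_eval _ _ _ _ hikk rfl
        have hUn : (Fin.snoc V (q + ε • d) : Fin (k+1) → ℝ × ℝ) (nxt i) = V ⟨(i:ℕ)+1, hi1k⟩ := by
          rw [hnxti]; exact snoc_eval _ _ _ _ hi1k rfl
        have hnxtk : nxt (⟨(i:ℕ), hikk⟩ : Fin k) = ⟨(i:ℕ)+1, hi1k⟩ :=
          nxt_eq _ _ _ (Nat.mod_eq_of_lt (by show (i:ℕ)+1 < k; omega))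
        by_cases hjk : (j : ℕ) = k
        · have hUj : (Fin.snoc V (q + ε • d) : Fin (k+1) → ℝ × ℝ) j = q + ε • d := snoc_evalW _ _ _ hjk
          rw [hUi, hUn, hUj, collinear_iff_d2]
          have hgg := hG1 ⟨(i:ℕ), hikk⟩ hilt
          rw [hnxtk] at hgg
          exact hgg
        · have hjlt : (j : ℕ) < k := by have h1 := j.isLt; omega
          have hUj : (Fin.snoc V (q + ε • d) : Fin (k+1) → ℝ × ℝ) j = V ⟨(j:ℕ), hjlt⟩ := snoc_eval _ _ _ _ hjlt rfl
          have hC := h ⟨(i:ℕ), hikk⟩ ⟨(j:ℕ), hjlt⟩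
            (by intro he; have hvv := congrArg Fin.val he; exact hji (Fin.ext hvv))
            (by
              rw [hnxtk]
              intro he
              apply hjn
              rw [hnxti]
              have hvv := congrArg Fin.val he
              exact Fin.ext hvv)
          rw [hnxtk] at hC
          rw [hUi, hUn, hUj]
          exact hC
  · -- C1 : W and V 0 strictly to one side of [V (k-2), V (k-1)]
    refine ⟨(d2 a b) • perp a, ?_, ?_, ?_⟩
    · have ha0 : a ≠ 0 := by intro hz; apply hab; rw [hz]; exact d2_zero_left b
      exact smul_ne_zero hab (perp_ne_zero ha0)
    · show dot2 ((d2 a b) • perp a) (q - p) = 0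
      rw [dot2_smul_left, dot2_perp]
      have hz : d2 a (q - p) = 0 := by rw [ha]; simp [d2]; ring
      rw [hz, mul_zero]
    · intro A hA
      simp only [Set.mem_insert_iff, Set.mem_singleton_iff] at hA
      rcases hA with rfl | rfl
      · show 0 < dot2 ((d2 a b) • perp a) (q + ε • d - p)
        rw [hsplit]
        simp only [dot2_aff_right, dot2_smul_left, dot2_perp]
        have hz : d2 a (q - p) = 0 := by rw [ha]; simp [d2]; ring
        rw [hz, mul_zero, zero_add]
        exact mul_pos hεpos ht4
      · show 0 < dot2 ((d2 a b) • perp a) (r - p)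
        simp only [dot2_smul_left, dot2_perp]
        have hz : d2 a (r - p) = d2 a b := by rw [ha, hb]; simp [d2]; ring
        rw [hz]
        exact mul_self_pos.mpr hab
  · -- C2 : V (k-2) and V 0 strictly to one side of [V (k-1), W]
    refine ⟨(d2 d a) • perp d, ?_, ?_, ?_⟩
    · exact smul_ne_zero hdne (perp_ne_zero hdnz)
    · show dot2 ((d2 d a) • perp d) (q + ε • d - q) = 0
      rw [add_sub_cancel_left]
      rw [dot2_smul_left, dot2_perp, d2_smul_right, d2_self, mul_zero, mul_zero]
    · intro A hA
      simp only [Set.mem_insert_iff, Set.mem_singleton_iff] at hA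
      rcases hA with rfl | rfl
      · show 0 < dot2 ((d2 d a) • perp d) (p - q)
        rw [dot2_smul_left, dot2_perp, ← ha]
        exact mul_self_pos.mpr hdne
      · show 0 < dot2 ((d2 d a) • perp d) (r - q)
        rw [dot2_smul_left, dot2_perp, ← hb]
        nlinarith [mul_pos ht3a ht3b, mul_self_nonneg K]
  · -- C3 : V (k-1) and W strictly to one side of [V 0, V 1]
    refine ⟨m3, ?_, ?_, ?_⟩
    · have hsr0 : s - r ≠ 0 := by intro hz; apply hF2; rw [hz]; exact d2_zero_left _
      rw [hm3]
      exact smul_ne_zero hF2 (perp_ne_zero hsr0)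
    · show dot2 m3 (s - r) = 0
      rw [hm3, dot2_smul_left, dot2_perp, d2_self, mul_zero]
    · intro A hA
      simp only [Set.mem_insert_iff, Set.mem_singleton_iff] at hA
      rcases hA with rfl | rfl
      · show 0 < dot2 m3 (q - r)
        exact hc3
      · show 0 < dot2 m3 (q + ε • d - r)
        exact hG3
end
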